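/- arXiv:2210.04317 — 2 statements merged into one kernel-verified Lean document; each statement's English description precedes it below -/
import Mathlib

section
/- Let P and P* be transition matrices of Markov chains on m states with stationary distributions π and π*, and suppose P* is reversible with respect to π*. Let μ*(P*) = 1 − ‖P* − 𝟙π*ᵀ‖₂ denote the spectral gap of P*. If ‖P − P*‖₂ < μ*(P*), then ‖π − π*‖₂ ≤ ‖π*ᵀ(P* − P)‖₂ / (μ*(P*) − ‖P − P*‖₂), where ‖·‖₂ denotes the ℓ2 operator norm for matrices and Euclidean norm for vectors. -/
open Matrix Finset

/-- ℓ2 operator norm of a real square matrix. -/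
noncomputable def opNorm {m : ℕ} (A : Matrix (Fin m) (Fin m) ℝ) : ℝ :=
  ‖Matrix.toEuclideanCLM (𝕜 := ℝ) A‖

/-- Euclidean norm of a vector. -/
noncomputable def vecNorm {m : ℕ} (x : Fin m → ℝ) : ℝ :=
  Real.sqrt (∑ i, x i ^ 2)

/-!
Write `δ = π - π*` and `Q = 𝟙π*ᵀ`. Since the entries of `δ` sum to zero, `δᵀQ = 0`, and
stationarity gives `δᵀ = δᵀ(P* - Q) + δᵀ(P - P*) - π*ᵀ(P* - P)`. Taking norms,
`‖δ‖ ≤ (‖P* - Q‖ + ‖P - P*‖) ‖δ‖ + ‖π*ᵀ(P* - P)‖`, and the gap condition says that the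
coefficient of `‖δ‖` on the right is less than one.
-/

section Algebra

variable {n R : Type*} [Fintype n] [CommRing R]

theorem vecMul_replicateRow (x v : n → R) : x ᵥ* replicateRow n v = (∑ i, x i) • v := by
  ext j
  simp [vecMul, dotProduct, replicateRow, sum_mul]

theorem sub_eq_vecMul_of_stationary {P Ps Q : Matrix n n R} {π πs : n → R}
    (hstat : π ᵥ* P = π) (hstats : πs ᵥ* Ps = πs) (hQ : (π - πs) ᵥ* Q = 0) :
    π - πs = (π - πs) ᵥ* (Ps - Q) + (π - πs) ᵥ* (P - Ps) - πs ᵥ* (Ps - P) := by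
  simp only [vecMul_sub, sub_vecMul, hstat, hstats, hQ]
  abel

end Algebra

section Norms

open scoped Matrix.Norms.L2Operator

variable {m : ℕ}

theorem vecNorm_eq_norm_toLp (x : Fin m → ℝ) : vecNorm x = ‖WithLp.toLp 2 x‖ := by
  simp [vecNorm, EuclideanSpace.norm_eq]

theorem vecNorm_add_le (x y : Fin m → ℝ) : vecNorm (x + y) ≤ vecNorm x + vecNorm y := by
  simpa only [vecNorm_eq_norm_toLp, WithLp.toLp_add] using norm_add_le _ _

theorem vecNorm_sub_le (x y : Fin m → ℝ) : vecNorm (x - y) ≤ vecNorm x + vecNorm y := by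
  simpa only [vecNorm_eq_norm_toLp, WithLp.toLp_sub] using norm_sub_le _ _

theorem vecNorm_vecMul_le (x : Fin m → ℝ) (A : Matrix (Fin m) (Fin m) ℝ) :
    vecNorm (x ᵥ* A) ≤ opNorm A * vecNorm x := by
  have h := l2_opNorm_mulVec Aᴴ (WithLp.toLp 2 x)
  rw [l2_opNorm_conjTranspose, conjTranspose_eq_transpose_of_trivial, mulVec_transpose] at h
  rw [vecNorm_eq_norm_toLp, vecNorm_eq_norm_toLp]
  exact h

end Norms

theorem eigen_perturbation_bound_general {m : ℕ}
    (P Ps : Matrix (Fin m) (Fin m) ℝ) (π πs : Fin m → ℝ)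
    (hπsum : ∑ i, π i = 1)
    (hπssum : ∑ i, πs i = 1)
    (hstat : π ᵥ* P = π) (hstats : πs ᵥ* Ps = πs)
    (hgap : opNorm (P - Ps) < 1 - opNorm (Ps - Matrix.of fun _ j => πs j)) :
    vecNorm (π - πs) ≤ vecNorm (πs ᵥ* (Ps - P)) /
      ((1 - opNorm (Ps - Matrix.of fun _ j => πs j)) - opNorm (P - Ps)) := by
  set Q : Matrix (Fin m) (Fin m) ℝ := Matrix.of fun _ j => πs j
  have hQ : (π - πs) ᵥ* Q = 0 := by
    rw [show Q = replicateRow (Fin m) πs from rfl, vecMul_replicateRow]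
    simp only [Pi.sub_apply, sum_sub_distrib, hπsum, hπssum, sub_self, zero_smul]
  have hbound : vecNorm (π - πs) ≤
      (opNorm (Ps - Q) + opNorm (P - Ps)) * vecNorm (π - πs) + vecNorm (πs ᵥ* (Ps - P)) :=
    calc vecNorm (π - πs)
        = vecNorm ((π - πs) ᵥ* (Ps - Q) + (π - πs) ᵥ* (P - Ps) - πs ᵥ* (Ps - P)) := by
          rw [← sub_eq_vecMul_of_stationary hstat hstats hQ]
      _ ≤ vecNorm ((π - πs) ᵥ* (Ps - Q)) + vecNorm ((π - πs) ᵥ* (P - Ps))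
          + vecNorm (πs ᵥ* (Ps - P)) :=
          (vecNorm_sub_le _ _).trans (by gcongr; exact vecNorm_add_le _ _)
      _ ≤ _ := by
          have := vecNorm_vecMul_le (π - πs) (Ps - Q)
          have := vecNorm_vecMul_le (π - πs) (P - Ps)
          linarith
  rw [le_div_iff₀ (by linarith)]
  linarith

/-- Eigen-perturbation bound: with μ*(P*) = 1 − ‖P* − 𝟙π*ᵀ‖₂, if ‖P − P*‖₂ < μ*(P*) then
‖π − π*‖₂ ≤ ‖π*ᵀ(P* − P)‖₂ / (μ*(P*) − ‖P − P*‖₂). -/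
theorem eigen_perturbation_bound {m : ℕ}
    (P Ps : Matrix (Fin m) (Fin m) ℝ) (π πs : Fin m → ℝ)
    (hPnn : ∀ i j, 0 ≤ P i j) (hProw : ∀ i, ∑ j, P i j = 1)
    (hPsnn : ∀ i j, 0 ≤ Ps i j) (hPsrow : ∀ i, ∑ j, Ps i j = 1)
    (hπnn : ∀ i, 0 ≤ π i) (hπsum : ∑ i, π i = 1)
    (hπsnn : ∀ i, 0 ≤ πs i) (hπssum : ∑ i, πs i = 1)
    (hstat : π ᵥ* P = π) (hstats : πs ᵥ* Ps = πs)
    (hrev : ∀ i j, πs i * Ps i j = πs j * Ps j i)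
    (hgap : opNorm (P - Ps) < 1 - opNorm (Ps - Matrix.of fun _ j => πs j)) :
    vecNorm (π - πs) ≤ vecNorm (πs ᵥ* (Ps - P)) /
      ((1 - opNorm (Ps - Matrix.of fun _ j => πs j)) - opNorm (P - Ps)) :=
  eigen_perturbation_bound_general P Ps π πs hπsum hπssum hstat hstats hgap
end

section
/- Let B be a symmetric m×m matrix with zero diagonal and np²/2 ≤ Bᵢⱼ ≤ 3np²/2 for all i ≠ j, where n, p > 0. Set d = 3mnp²/2 and define the Markov chain Q on m states by Qᵢⱼ = Bᵢⱼ/d for i ≠ j and Qᵢᵢ = 1 − Σ_{k≠i} Bᵢₖ/d. Then Q has uniform stationary distribution and its spectral gap satisfies 1 − λ₂(Q) ≥ 1/3, where λ₂(Q) is the second largest eigenvalue of Q. -/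
open Matrix Finset

/-- The reference random walk Q with d = 3mnp²/2 has uniform stationary distribution and
spectral gap 1 − λ₂(Q) ≥ 1/3 (stated via the Rayleigh quotient over unit vectors ⊥ 𝟙). -/
theorem reference_chain_spectral_gap {m : ℕ} (n p : ℝ) (hn : 0 < n) (hp : 0 < p)
    (B : Matrix (Fin m) (Fin m) ℝ) (hsym : B.IsSymm) (hdiag : ∀ i, B i i = 0)
    (hB : ∀ i j, i ≠ j → n * p^2 / 2 ≤ B i j ∧ B i j ≤ 3 * n * p^2 / 2)
    (Q : Matrix (Fin m) (Fin m) ℝ)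
    (hQ : ∀ i j, Q i j = if i = j then
        1 - (∑ k ∈ Finset.univ.erase i, B i k) / (3 * m * n * p^2 / 2)
      else B i j / (3 * m * n * p^2 / 2)) :
    ((fun _ => (1 : ℝ) / m) ᵥ* Q = fun _ => (1 : ℝ) / m) ∧
    ∀ u : Fin m → ℝ, ∑ i, (u i)^2 = 1 → ∑ i, u i = 0 →
      u ⬝ᵥ (Q *ᵥ u) ≤ 2 / 3 := by
  set d : ℝ := 3 * m * n * p ^ 2 / 2 with hd
  constructor
  · funext j
    show (∑ i, (1:ℝ)/m * Q i j) = 1/m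
    rw [← Finset.add_sum_erase _ _ (Finset.mem_univ j)]
    have h1 : ∑ i ∈ Finset.univ.erase j, (1:ℝ)/m * Q i j
        = (1/m) * ((∑ k ∈ Finset.univ.erase j, B j k) / d) := by
      rw [Finset.sum_div, Finset.mul_sum]
      apply Finset.sum_congr rfl
      intro i hi
      rw [hQ, if_neg (Finset.ne_of_mem_erase hi), hsym.apply]
    rw [h1, hQ, if_pos rfl]
    ring
  · intro u hnorm hsum
    have hm : m ≠ 0 := by
      rintro rfl
      simp at hnorm
    have hmpos : (0:ℝ) < m := Nat.cast_pos.mpr (Nat.pos_of_ne_zero hm)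
    have hdpos : 0 < d := by
      rw [hd]; positivity
    -- rewrite the quadratic form
    have step : ∀ i, ∑ j, Q i j * u j
        = u i - (∑ k, B i k) * u i / d + (∑ j, B i j * u j) / d := by
      intro i
      rw [← Finset.add_sum_erase _ (fun j => Q i j * u j) (Finset.mem_univ i)]
      have h2 : ∑ j ∈ Finset.univ.erase i, Q i j * u j
          = ∑ j ∈ Finset.univ.erase i, B i j * u j / d := by
        apply Finset.sum_congr rfl
        intro j hj
        rw [hQ, if_neg (Finset.ne_of_mem_erase hj).symm]
        ring
      have h3 : ∑ k ∈ Finset.univ.erase i, B i k = ∑ k, B i k := by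
        rw [← Finset.add_sum_erase _ (fun k => B i k) (Finset.mem_univ i), hdiag, zero_add]
      have h4 : ∑ j ∈ Finset.univ.erase i, B i j * u j / d = (∑ j, B i j * u j) / d := by
        rw [Finset.sum_div, ← Finset.add_sum_erase _ (fun j => B i j * u j / d)
          (Finset.mem_univ i)]
        simp [hdiag]
      rw [h2, hQ, if_pos rfl, h3, h4]
      ring
    set E1 : ℝ := ∑ i, (∑ k, B i k) * (u i)^2 with hE1
    set E2 : ℝ := ∑ i, ∑ j, B i j * (u i * u j) with hE2
    have hform : u ⬝ᵥ (Q *ᵥ u) = 1 - E1 / d + E2 / d := by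
      simp only [dotProduct, mulVec]
      calc ∑ i, u i * ∑ j, Q i j * u j
          = ∑ i, ((u i)^2 - (∑ k, B i k) * (u i)^2 / d + (∑ j, B i j * (u i * u j)) / d) := by
            apply Finset.sum_congr rfl
            intro i _
            rw [step i]
            have : ∑ j, B i j * (u i * u j) = u i * ∑ j, B i j * u j := by
              rw [Finset.mul_sum]
              apply Finset.sum_congr rfl
              intro j _
              ring
            rw [this]
            ring
        _ = 1 - E1 / d + E2 / d := by
            rw [Finset.sum_add_distrib, Finset.sum_sub_distrib, hnorm, ← Finset.sum_div,
              ← Finset.sum_div, hE1, hE2]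
    -- the Laplacian quadratic form
    set T : ℝ := ∑ i, ∑ j, B i j * (u i - u j)^2 with hT
    have hT2 : T = 2 * E1 - 2 * E2 := by
      have hBsym : ∀ i j, B j i = B i j := fun i j => hsym.apply i j
      have e1 : ∑ i, ∑ j, B i j * (u j)^2 = E1 := by
        rw [Finset.sum_comm, hE1]
        apply Finset.sum_congr rfl
        intro j _
        rw [Finset.sum_mul]
        apply Finset.sum_congr rfl
        intro i _
        rw [hBsym i j]
      have e0 : ∑ i, ∑ j, B i j * (u i)^2 = E1 := by
        rw [hE1]
        exact Finset.sum_congr rfl fun i _ => (Finset.sum_mul _ _ _).symm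
      calc T = ∑ i, ∑ j, (B i j * (u i)^2 + B i j * (u j)^2 - 2 * (B i j * (u i * u j))) := by
              apply Finset.sum_congr rfl
              intro i _
              apply Finset.sum_congr rfl
              intro j _
              ring
        _ = (∑ i, ∑ j, B i j * (u i)^2) + (∑ i, ∑ j, B i j * (u j)^2)
              - 2 * ∑ i, ∑ j, B i j * (u i * u j) := by
              rw [Finset.mul_sum, ← Finset.sum_add_distrib, ← Finset.sum_sub_distrib]
              apply Finset.sum_congr rfl
              intro i _
              rw [Finset.mul_sum, ← Finset.sum_add_distrib, ← Finset.sum_sub_distrib]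
        _ = 2 * E1 - 2 * E2 := by
              rw [e0, e1, hE2]
              ring
    have hTlow : (m : ℝ) * (n * p^2) ≤ T := by
      have hsq : ∑ i, ∑ j, (u i - u j)^2 = 2 * m := by
        have inner : ∀ i : Fin m, ∑ j, (u i - u j)^2 = m * (u i)^2 + 1 := by
          intro i
          have hexp : ∀ j, (u i - u j)^2 = (u i)^2 - 2 * u i * u j + (u j)^2 :=
            fun j => by ring
          simp only [hexp]
          rw [Finset.sum_add_distrib, Finset.sum_sub_distrib, ← Finset.mul_sum, hnorm,
            Finset.sum_const, Finset.card_univ, Fintype.card_fin, nsmul_eq_mul, hsum]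
          ring
        simp only [inner]
        rw [Finset.sum_add_distrib, ← Finset.mul_sum, hnorm, Finset.sum_const,
          Finset.card_univ, Fintype.card_fin, nsmul_eq_mul]
        ring
      calc (m : ℝ) * (n * p^2) = (n * p^2 / 2) * (2 * m) := by ring
        _ = (n * p^2 / 2) * ∑ i, ∑ j, (u i - u j)^2 := by rw [hsq]
        _ = ∑ i, ∑ j, (n * p^2 / 2) * (u i - u j)^2 := by
            rw [Finset.mul_sum]
            exact Finset.sum_congr rfl fun i _ => Finset.mul_sum _ _ _
        _ ≤ T := by
            apply Finset.sum_le_sum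
            intro i _
            apply Finset.sum_le_sum
            intro j _
            by_cases hij : i = j
            · subst hij; simp
            · exact mul_le_mul_of_nonneg_right (hB i j hij).1 (sq_nonneg _)
    -- conclude
    rw [hform]
    have key : (1:ℝ)/3 ≤ (E1 - E2) / d := by
      rw [le_div_iff₀ hdpos, hd]
      nlinarith [hT2, hTlow]
    have hsplit : E1 / d - E2 / d = (E1 - E2) / d := by ring
    linarith [key, hsplit]
end
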